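/- Let r > d > 0 and let x, y be nonzero reals. Then Q(x,y) = 0 and Q(y,x) = 0 if and only if (x,y) = (1,1) or (x,y) = (r/d, r/d); i.e., the only stationary solutions of the characteristic system are (1,1) and (r/d, r/d). -/

import Mathlib

/-- The coefficient `Q(x,y) = (r+d)x − r/2 − (r/2)(x/y) − d·x²`. -/
noncomputable def Qfun (r d x y : ℝ) : ℝ :=
  (r + d) * x - r / 2 - r / 2 * (x / y) - d * x ^ 2

/-!
Clearing denominators, `y Q(x,y) - x Q(y,x) = d x y (y - x)`, so a common zero of `Q(x,y)` and
`Q(y,x)` with `x y ≠ 0` lies on the diagonal. There `Q(x,x) = -(x - 1)(d x - r)`, whose roots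
are `1` and `r / d`.
-/

theorem Qfun_self (r d : ℝ) {x : ℝ} (hx : x ≠ 0) :
    Qfun r d x x = -((x - 1) * (d * x - r)) := by
  rw [Qfun, div_self hx]
  ring

theorem Qfun_self_eq_zero_iff (r : ℝ) {d x : ℝ} (hd : d ≠ 0) (hx : x ≠ 0) :
    Qfun r d x x = 0 ↔ x = 1 ∨ x = r / d := by
  rw [Qfun_self r d hx, neg_eq_zero, mul_eq_zero, sub_eq_zero, sub_eq_zero, eq_div_iff hd,
    mul_comm]

theorem mul_Qfun_sub_mul_Qfun_swap (r d : ℝ) {x y : ℝ} (hx : x ≠ 0) (hy : y ≠ 0) :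
    y * Qfun r d x y - x * Qfun r d y x = d * x * y * (y - x) := by
  rw [Qfun, Qfun]
  field_simp
  ring

theorem Qfun_eq_zero_and_swap_iff (r : ℝ) {d x y : ℝ} (hd : d ≠ 0) (hx : x ≠ 0) (hy : y ≠ 0) :
    Qfun r d x y = 0 ∧ Qfun r d y x = 0 ↔ x = y ∧ Qfun r d x x = 0 := by
  constructor
  · rintro ⟨hxy, hyx⟩
    have hdiff := mul_Qfun_sub_mul_Qfun_swap r d hx hy
    simp only [hxy, hyx, mul_zero, sub_self, zero_eq_mul] at hdiff
    obtain rfl : y = x := by simpa [hd, hx, hy, sub_eq_zero] using hdiff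
    exact ⟨rfl, hxy⟩
  · rintro ⟨rfl, h⟩
    exact ⟨h, h⟩

theorem stationary_points_general (r d x y : ℝ) (hd : 0 < d)
    (hx : x ≠ 0) (hy : y ≠ 0) :
    (Qfun r d x y = 0 ∧ Qfun r d y x = 0) ↔
      ((x, y) = ((1 : ℝ), (1 : ℝ)) ∨ (x, y) = (r / d, r / d)) := by
  rw [Qfun_eq_zero_and_swap_iff r hd.ne' hx hy, Qfun_self_eq_zero_iff r hd.ne' hx]
  simp only [Prod.mk.injEq]
  constructor
  · rintro ⟨rfl, rfl | rfl⟩ <;> simp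
  · rintro (⟨rfl, rfl⟩ | ⟨rfl, rfl⟩) <;> simp

/-- the only stationary solutions of the characteristic system are
`(1,1)` and `(r/d, r/d)`. -/
theorem stationary_points (r d x y : ℝ) (hd : 0 < d) (hrd : d < r)
    (hx : x ≠ 0) (hy : y ≠ 0) :
    (Qfun r d x y = 0 ∧ Qfun r d y x = 0) ↔
      ((x, y) = ((1 : ℝ), (1 : ℝ)) ∨ (x, y) = (r / d, r / d)) :=
  stationary_points_general r d x y hd hx hy
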